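/- arXiv:2109.07969 — 2 statements merged into one kernel-verified Lean document; each statement's English description precedes it below -/
import Mathlib

section
/- Let C₀ be a cone in a real vector space V (a conic, salient subset which is the boundary in V∖{0} of a convex open set A₀). If v, u ∈ C₀ are linearly independent, then v + u lies in the closure of A₀. -/
/-- If `C₀` is a cone in a real vector space `V` (conic, salient, and the
boundary in `V ∖ {0}` of an open convex set `A₀`), and `v, u ∈ C₀` are linearly
independent, then `v + u` lies in the closure of `A₀`. -/
theorem stmt_0 {V : Type*} [NormedAddCommGroup V] [NormedSpace ℝ V]
    [FiniteDimensional ℝ V]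
    (A₀ : Set V) (hAopen : IsOpen A₀) (hAconv : Convex ℝ A₀) (hA0 : (0 : V) ∉ A₀)
    (C₀ : Set V) (hC : C₀ = frontier A₀ \ {0})
    (hconic : ∀ v ∈ C₀, ∀ c : ℝ, 0 < c → c • v ∈ C₀)
    (hsalient : ∀ v ∈ C₀, -v ∉ C₀)
    (v u : V) (hv : v ∈ C₀) (hu : u ∈ C₀)
    (hind : LinearIndependent ℝ ![v, u]) :
    v + u ∈ closure A₀ := by
  -- A₀ is closed under positive scaling
  have hcone : ∀ a ∈ A₀, ∀ c : ℝ, 0 < c → c • a ∈ A₀ := by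
    intro a ha c hc
    have hane : a ≠ 0 := fun h => hA0 (h ▸ ha)
    set U : Set ℝ := {t : ℝ | t • a ∈ A₀} with hU
    set W : Set ℝ := {t : ℝ | t • a ∈ (closure A₀)ᶜ} with hW
    have hcont : Continuous (fun t : ℝ => t • a) := continuous_id.smul continuous_const
    have hUopen : IsOpen U := hAopen.preimage hcont
    have hWopen : IsOpen W := (isClosed_closure.isOpen_compl).preimage hcont
    have hdisj : Disjoint U W := by
      rw [Set.disjoint_left]
      intro t htU htW
      exact htW (subset_closure htU)
    have hsub : Set.Ioi (0:ℝ) ⊆ U ∪ W := by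
      intro t ht
      by_cases hmem : t • a ∈ A₀
      · exact Or.inl hmem
      by_cases hcl : t • a ∈ closure A₀
      · exfalso
        have hfr : t • a ∈ frontier A₀ := by
          rw [hAopen.frontier_eq]; exact ⟨hcl, hmem⟩
        have hne : t • a ≠ 0 := smul_ne_zero (ne_of_gt ht) hane
        have htC : t • a ∈ C₀ := by rw [hC]; exact ⟨hfr, hne⟩
        have := hconic _ htC t⁻¹ (inv_pos.mpr ht)
        rw [smul_smul, inv_mul_cancel₀ (ne_of_gt ht), one_smul, hC] at this
        rw [hAopen.frontier_eq] at this
        exact this.1.2 ha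
      · exact Or.inr hcl
    have hone : (Set.Ioi (0:ℝ) ∩ U).Nonempty :=
      ⟨1, Set.mem_Ioi.mpr one_pos, by simp [hU, ha]⟩
    have := IsPreconnected.subset_left_of_subset_union hUopen hWopen hdisj hsub hone
      (isPreconnected_Ioi)
    exact this (Set.mem_Ioi.mpr hc)
  have hvcl : v ∈ closure A₀ := by
    rw [hC] at hv; exact frontier_subset_closure hv.1
  have hucl : u ∈ closure A₀ := by
    rw [hC] at hu; exact frontier_subset_closure hu.1
  have hm : (2:ℝ)⁻¹ • v + (2:ℝ)⁻¹ • u ∈ closure A₀ :=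
    hAconv.closure hvcl hucl (by norm_num) (by norm_num) (by norm_num)
  have h2 : v + u = (2:ℝ) • ((2:ℝ)⁻¹ • v + (2:ℝ)⁻¹ • u) := by
    rw [smul_add, smul_smul, smul_smul]; norm_num
  rw [h2]
  have himg : (fun x : V => (2:ℝ) • x) '' closure A₀ ⊆ closure ((fun x : V => (2:ℝ) • x) '' A₀) :=
    image_closure_subset_closure_image (continuous_const_smul _)
  have hsub2 : (fun x : V => (2:ℝ) • x) '' A₀ ⊆ A₀ := by
    rintro _ ⟨x, hx, rfl⟩
    exact hcone x hx 2 two_pos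
  exact closure_mono hsub2 (himg ⟨_, hm, rfl⟩)
end

section
/- Let H be a lightlike hypersurface of a Finsler spacetime with degenerate direction spanned by a lightlike v ∈ TₚH. Then g_v restricted to TₚH is negative semi-definite, and its radical in TₚH is exactly the span of v; in particular the degenerate direction at p is unique. -/
/-- A symmetric bilinear form is Lorentzian (signature `(+,-,…,-)`) iff there is a
timelike vector on whose orthogonal complement the form is negative definite. -/
def IsLorentzian {V : Type*} [AddCommGroup V] [Module ℝ V]
    (B : V →ₗ[ℝ] V →ₗ[ℝ] ℝ) : Prop :=
  ∃ e : V, 0 < B e e ∧ ∀ w : V, B e w = 0 → w ≠ 0 → B w w < 0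

/-- pointwise, at `p ∈ H`: if `H` is a lightlike hypersurface of a Finsler
spacetime with degenerate direction spanned by a lightlike `v ∈ TₚH`, where
`TₚH = T_v Cₚ = [v]^{⊥_L}` is the `g_v`-orthogonal hyperplane of the null vector `v`
for the Lorentzian fundamental tensor `g_v = B`, then `B` restricted to `TₚH` is
negative semi-definite and its radical in `TₚH` is exactly the span of `v`; in
particular the degenerate direction at `p` is unique. -/
theorem stmt_6 {V : Type*} [AddCommGroup V] [Module ℝ V] [FiniteDimensional ℝ V]
    (B : V →ₗ[ℝ] V →ₗ[ℝ] ℝ) (hsymm : ∀ x y : V, B x y = B y x)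
    (hlor : IsLorentzian B)
    (v : V) (hv0 : v ≠ 0) (hnull : B v v = 0)
    (TpH : Submodule ℝ V) (hH : TpH = LinearMap.ker (B v)) :
    (∀ u ∈ TpH, B u u ≤ 0) ∧
      (∀ u ∈ TpH, (∀ w ∈ TpH, B u w = 0) ↔ ∃ c : ℝ, u = c • v) := by
  obtain ⟨e, hee, hneg⟩ := hlor
  have hE : ∀ x : V, B e x = 0 → B x x ≤ 0 := by
    intro x hx
    by_cases hx0 : x = 0
    · simp [hx0]
    · exact le_of_lt (hneg x hx hx0)
  have hnd : ∀ x : V, (∀ y : V, B x y = 0) → x = 0 := by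
    intro x hx
    by_contra h0
    have h1 : B e x = 0 := by rw [hsymm]; exact hx e
    have h2 := hneg x h1 h0
    rw [hx x] at h2; exact lt_irrefl 0 h2
  have hCS : ∀ x y : V, B e x = 0 → B e y = 0 → (B x y) ^ 2 ≤ B x x * B y y := by
    intro x y hx hy
    by_cases hy0 : y = 0
    · simp [hy0]
    · have hyy : B y y < 0 := hneg y hy hy0
      have hq : B e (x - (B x y / B y y) • y) = 0 := by
        simp [map_sub, map_smul, hx, hy]
      have h1 := hE _ hq
      have hexp : B (x - (B x y / B y y) • y) (x - (B x y / B y y) • y)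
          = B x x - 2 * (B x y / B y y) * (B x y) + (B x y / B y y) ^ 2 * B y y := by
        simp only [map_sub, map_smul, LinearMap.sub_apply, LinearMap.smul_apply,
          smul_eq_mul]
        rw [hsymm y x]; ring
      rw [hexp] at h1
      have hc2 : (B x y / B y y) * B y y = B x y := div_mul_cancel₀ _ (ne_of_lt hyy)
      nlinarith [h1, hyy, sq_nonneg (B x y / B y y)]
  have hbev : B e v ≠ 0 := by
    intro h
    have h2 := hneg v h hv0
    rw [hnull] at h2; exact lt_irrefl 0 h2
  have hA : B e e ≠ 0 := ne_of_gt hee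
  have key : ∀ u : V, B v u = 0 → B u u ≤ 0 := by
    intro u hu
    set a := B e u / B e e with ha
    set b := B e v / B e e with hb
    have hbe : B e v = b * B e e := by rw [hb]; field_simp
    have hae : B e u = a * B e e := by rw [ha]; field_simp
    have hb0 : b ≠ 0 := by
      intro h; rw [h, zero_mul] at hbe; exact hbev hbe
    set w := u - a • e with hw
    set z := v - b • e with hz
    have hBew : B e w = 0 := by
      simp only [hw, map_sub, map_smul, smul_eq_mul]
      rw [hae]; ring
    have hBez : B e z = 0 := by
      simp only [hz, map_sub, map_smul, smul_eq_mul]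
      rw [hbe]; ring
    have hzz : B z z = -(b ^ 2) * B e e := by
      simp only [hz, map_sub, map_smul, LinearMap.sub_apply, LinearMap.smul_apply,
        smul_eq_mul]
      rw [hsymm v e, hbe, hnull]; ring
    have hzw : B z w = -(a * b) * B e e := by
      simp only [hz, hw, map_sub, map_smul, LinearMap.sub_apply, LinearMap.smul_apply,
        smul_eq_mul]
      rw [hsymm v e, hbe, hae, hu]; ring
    have huu : B u u = B w w + a ^ 2 * B e e := by
      have : B w w = B u u - 2 * a * B e u + a ^ 2 * B e e := by
        simp only [hw, map_sub, map_smul, LinearMap.sub_apply, LinearMap.smul_apply,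
          smul_eq_mul]
        rw [hsymm u e]; ring
      rw [this, hae]; ring
    have hcs := hCS z w hBez hBew
    rw [hzz, hzw] at hcs
    have hbb : 0 < b ^ 2 := by positivity
    rw [huu]
    nlinarith [hcs, mul_pos hbb hee]
  constructor
  · intro u hu
    rw [hH, LinearMap.mem_ker] at hu
    exact key u hu
  · intro u hu
    rw [hH, LinearMap.mem_ker] at hu
    constructor
    · intro hrad
      have hrad' : ∀ y : V, B v y = 0 → B u y = 0 := by
        intro y hy
        exact hrad y (by rw [hH, LinearMap.mem_ker]; exact hy)
      have hve : B v e ≠ 0 := by rw [hsymm v e]; exact hbev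
      set c := B u e / B v e with hc
      have claim : ∀ y : V, B u y = c * B v y := by
        intro y
        have hy' : B v (y - (B v y / B v e) • e) = 0 := by
          simp only [map_sub, map_smul, smul_eq_mul]
          field_simp; ring
        have hu' := hrad' _ hy'
        simp only [map_sub, map_smul, smul_eq_mul] at hu'
        have : B u y = (B v y / B v e) * B u e := by linarith
        rw [this, hc]; field_simp
      have hzero : u - c • v = 0 := by
        apply hnd
        intro y
        simp only [map_sub, map_smul, LinearMap.sub_apply, LinearMap.smul_apply,
          smul_eq_mul]
        rw [claim y]; ring
      exact ⟨c, by rw [← sub_eq_zero]; exact hzero⟩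
    · rintro ⟨c, rfl⟩ w hw
      rw [hH, LinearMap.mem_ker] at hw
      simp only [map_smul, LinearMap.smul_apply, smul_eq_mul]
      rw [hw, mul_zero]
end
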